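/- arXiv:1412.8020 — 4 statements merged into one kernel-verified Lean document; each statement's English description precedes it below -/
import Mathlib

section
/- Let $G$ be a group acting by automorphisms on a rooted tree $T$ with no leaves, and let $T', T''$ be two minimal invariant rooted subtrees with no leaves. If there exists a boundary point lying in both $\partial T'$ and $\partial T''$, then $T' = T''$. Hence the boundaries of distinct minimal invariant subtrees are disjoint. -/
/-- A ray (boundary point) of a rooted tree, given by its vertex at each level. -/
def IsRay {V : Type*} (root : V) (parent : V → V) (level : V → ℕ)
    (ξ : ℕ → V) : Prop :=
  ξ 0 = root ∧ ∀ n : ℕ, parent (ξ (n + 1)) = ξ n ∧ level (ξ n) = n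

/-- A rooted `G`-invariant subtree with no leaves: it contains the root, is
closed under taking parents, every vertex has a child in it, and it is
invariant under the action of `G`. -/
def IsInvSubtree (G : Type*) {V : Type*} [Group G] [MulAction G V]
    (root : V) (parent : V → V) (level : V → ℕ) (S : Set V) : Prop :=
  root ∈ S ∧ (∀ v ∈ S, parent v ∈ S) ∧
    (∀ v ∈ S, ∃ w ∈ S, parent w = v ∧ level w = level v + 1) ∧
    (∀ (g : G), ∀ v ∈ S, g • v ∈ S)

/-- A minimal invariant rooted subtree with no leaves. -/
def IsMinInvSubtree (G : Type*) {V : Type*} [Group G] [MulAction G V]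
    (root : V) (parent : V → V) (level : V → ℕ) (S : Set V) : Prop :=
  IsInvSubtree G root parent level S ∧
    ∀ S' : Set V, IsInvSubtree G root parent level S' → S' ⊆ S → S' = S

/-- Two minimal invariant rooted subtrees with no leaves whose boundaries share
a common ray coincide; hence boundaries of distinct minimal invariant subtrees
are disjoint. -/
theorem stmt6 {G V : Type*} [Group G] [MulAction G V]
    (root : V) (parent : V → V) (level : V → ℕ)
    (hroot : level root = 0)
    (hroots : ∀ v : V, level v = 0 → v = root)
    (hlp : ∀ v : V, level v ≠ 0 → level (parent v) + 1 = level v)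
    (hlevel : ∀ (g : G) (v : V), level (g • v) = level v)
    (hparent : ∀ (g : G) (v : V), parent (g • v) = g • parent v)
    (S S' : Set V)
    (hS : IsMinInvSubtree G root parent level S)
    (hS' : IsMinInvSubtree G root parent level S')
    (ξ : ℕ → V) (hξ : IsRay root parent level ξ)
    (h1 : ∀ n, ξ n ∈ S) (h2 : ∀ n, ξ n ∈ S') :
    S = S' := by
  classical
  have hgroot : ∀ g : G, g • root = root := fun g =>
    hroots _ (by rw [hlevel, hroot])
  obtain ⟨hξ0, hξs⟩ := hξ
  have hξlev : ∀ n, level (ξ n) = n := fun n => (hξs n).2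
  have hξpar : ∀ n, parent (ξ (n + 1)) = ξ n := fun n => (hξs n).1
  set m := level (parent root) with hm
  set p : ℕ → V := fun k => parent^[k] root with hp
  have hp0 : p 0 = root := rfl
  have hpsucc : ∀ k, p (k + 1) = parent (p k) := fun k =>
    Function.iterate_succ_apply' parent k root
  -- levels along the ancestor chain of the root
  have hplev : ∀ k, 1 ≤ k → k ≤ m + 1 → level (p k) = m + 1 - k := by
    intro k hk1 hk2
    induction k with
    | zero => omega
    | succ k ih =>
      rcases Nat.eq_zero_or_pos k with h0 | hpos
      · subst h0
        rw [hpsucc, hp0]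
        omega
      · have h1' : level (p k) = m + 1 - k := ih hpos (by omega)
        have h2' : level (p k) ≠ 0 := by omega
        have h3 := hlp (p k) h2'
        rw [hpsucc]
        omega
  have hpm1 : p (m + 1) = root := hroots _ (by rw [hplev (m + 1) (by omega) le_rfl]; omega)
  -- the chain lies in any invariant subtree
  have hpmem : ∀ (T : Set V), IsInvSubtree G root parent level T → ∀ k, p k ∈ T := by
    intro T hT k
    induction k with
    | zero => exact hT.1
    | succ k ih => rw [hpsucc]; exact hT.2.1 _ ih
  obtain ⟨⟨hSroot, hSpar, hSchild, hSinv⟩, hSmin⟩ := hS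
  obtain ⟨⟨hS'root, hS'par, hS'child, hS'inv⟩, hS'min⟩ := hS'
  have hSsub : IsInvSubtree G root parent level S := ⟨hSroot, hSpar, hSchild, hSinv⟩
  have hS'sub : IsInvSubtree G root parent level S' := ⟨hS'root, hS'par, hS'child, hS'inv⟩
  -- key claim: some g sends p 1 to ξ m
  have hg : ∃ g : G, g • p 1 = ξ m := by
    rcases Nat.eq_zero_or_pos m with hm0 | hmpos
    · refine ⟨1, ?_⟩
      have : level (p 1) = 0 := by rw [hplev 1 le_rfl (by omega)]; omega
      rw [one_smul, hroots _ this, ← hξ0, hm0]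
    · -- build a branch above p 1 inside S
      choose f hf1 hf2 hf3 using hSchild
      have hp1S : p 1 ∈ S := hpmem S hSsub 1
      let β : ℕ → {v : V // v ∈ S} := fun n =>
        Nat.rec ⟨f (p 1) hp1S, hf1 _ _⟩ (fun _ prev => ⟨f prev.1 prev.2, hf1 _ _⟩) n
      have hβ0par : parent (β 0).1 = p 1 := hf2 _ _
      have hβpar : ∀ n, parent (β (n + 1)).1 = (β n).1 := fun n => hf2 _ _
      have hβlev : ∀ n, level (β n).1 = m + 1 + n := by
        intro n
        induction n with
        | zero =>
          have := hf3 (p 1) hp1S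
          have h1lev : level (p 1) = m := by rw [hplev 1 le_rfl (by omega)]; omega
          show level (f (p 1) hp1S) = m + 1 + 0
          omega
        | succ n ih =>
          have := hf3 (β n).1 (β n).2
          show level (f (β n).1 (β n).2) = m + 1 + (n + 1)
          omega
      -- the invariant subtree generated by the root chain and the branch
      set B : Set V := {v | ∃ h : G, (∃ k ≤ m, v = h • p k) ∨ ∃ n, v = h • (β n).1} with hB
      have hrootB : root ∈ B := ⟨1, Or.inl ⟨0, Nat.zero_le m, by rw [hp0, one_smul]⟩⟩
      have hBsub : B ⊆ S := by
        rintro v ⟨h, ⟨k, _, rfl⟩ | ⟨n, rfl⟩⟩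
        · exact hSinv h _ (hpmem S hSsub k)
        · exact hSinv h _ (β n).2
      have hBinv : IsInvSubtree G root parent level B := by
        refine ⟨hrootB, ?_, ?_, ?_⟩
        · rintro v ⟨h, ⟨k, hk, rfl⟩ | ⟨n, rfl⟩⟩
          · rw [hparent, ← hpsucc]
            rcases Nat.lt_or_ge k m with hlt | hge
            · exact ⟨h, Or.inl ⟨k + 1, by omega, rfl⟩⟩
            · have : k = m := by omega
              subst this
              rw [hpm1, hgroot]
              exact hrootB
          · rw [hparent]
            cases n with
            | zero => rw [hβ0par]; exact ⟨h, Or.inl ⟨1, hmpos, rfl⟩⟩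
            | succ n => rw [hβpar]; exact ⟨h, Or.inr ⟨n, rfl⟩⟩
        · rintro v ⟨h, ⟨k, hk, rfl⟩ | ⟨n, rfl⟩⟩
          · rcases Nat.eq_zero_or_pos k with hk0 | hkpos
            · subst hk0
              refine ⟨p m, ⟨1, Or.inl ⟨m, le_rfl, (one_smul _ _).symm⟩⟩, ?_, ?_⟩
              · rw [← hpsucc, hpm1, hp0, hgroot]
              · rw [hp0, hgroot, hroot, hplev m hmpos (by omega)]; omega
            · rcases Nat.lt_or_ge 1 k with h1k | h1k
              · refine ⟨h • p (k - 1), ⟨h, Or.inl ⟨k - 1, by omega, rfl⟩⟩, ?_, ?_⟩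
                · have hk' : k - 1 + 1 = k := by omega
                  rw [hparent, ← hpsucc, hk']
                · rw [hlevel, hlevel, hplev (k - 1) (by omega) (by omega),
                    hplev k hkpos (by omega)]
                  omega
              · have : k = 1 := by omega
                subst this
                refine ⟨h • (β 0).1, ⟨h, Or.inr ⟨0, rfl⟩⟩, ?_, ?_⟩
                · rw [hparent, hβ0par]
                · rw [hlevel, hlevel, hβlev, hplev 1 le_rfl (by omega)]
                  omega
          · refine ⟨h • (β (n + 1)).1, ⟨h, Or.inr ⟨n + 1, rfl⟩⟩, ?_, ?_⟩
            · rw [hparent, hβpar]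
            · have e1 := hβlev (n + 1)
              have e2 := hβlev n
              rw [hlevel, hlevel]
              omega
        · rintro g v ⟨h, ⟨k, hk, rfl⟩ | ⟨n, rfl⟩⟩
          · exact ⟨g * h, Or.inl ⟨k, hk, (mul_smul g h _).symm⟩⟩
          · exact ⟨g * h, Or.inr ⟨n, (mul_smul g h _).symm⟩⟩
      have hBS : B = S := hSmin B hBinv hBsub
      have : ξ m ∈ B := hBS ▸ h1 m
      obtain ⟨h, ⟨k, hk, heq⟩ | ⟨n, heq⟩⟩ := this
      · rcases Nat.eq_zero_or_pos k with hk0 | hkpos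
        · exfalso
          subst hk0
          have := hξlev m
          rw [heq, hp0, hgroot, hroot] at this
          omega
        · have hkm : k = 1 := by
            have := hξlev m
            rw [heq, hlevel, hplev k hkpos (by omega)] at this
            omega
          subst hkm
          exact ⟨h, heq.symm⟩
      · exfalso
        have := hξlev m
        rw [heq, hlevel, hβlev] at this
        omega
  obtain ⟨g, hgp1⟩ := hg
  -- the common invariant subtree
  set A : Set V := {v | ∃ h : G, (∃ n, v = h • ξ n) ∨ ∃ k ≤ m, v = h • p k} with hA
  have hrootA : root ∈ A := ⟨1, Or.inl ⟨0, by rw [hξ0, one_smul]⟩⟩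
  have hp1lev : level (p 1) = m := by rw [hplev 1 le_rfl (by omega)]; omega
  have hAinv : IsInvSubtree G root parent level A := by
    refine ⟨hrootA, ?_, ?_, ?_⟩
    · rintro v ⟨h, ⟨n, rfl⟩ | ⟨k, hk, rfl⟩⟩
      · cases n with
        | zero =>
          rw [hξ0, hparent, ← hp0, ← hpsucc]
          rcases Nat.eq_zero_or_pos m with hm0 | hmpos
          · have : level (p 1) = 0 := by omega
            rw [hroots _ this, hgroot]
            exact hrootA
          · exact ⟨h, Or.inr ⟨1, hmpos, rfl⟩⟩
        | succ n =>
          rw [hparent, hξpar]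
          exact ⟨h, Or.inl ⟨n, rfl⟩⟩
      · rw [hparent, ← hpsucc]
        rcases Nat.lt_or_ge k m with hlt | hge
        · exact ⟨h, Or.inr ⟨k + 1, by omega, rfl⟩⟩
        · have : k = m := by omega
          subst this
          rw [hpm1, hgroot]
          exact hrootA
    · rintro v ⟨h, ⟨n, rfl⟩ | ⟨k, hk, rfl⟩⟩
      · refine ⟨h • ξ (n + 1), ⟨h, Or.inl ⟨n + 1, rfl⟩⟩, ?_, ?_⟩
        · rw [hparent, hξpar]
        · rw [hlevel, hlevel, hξlev, hξlev]
      · rcases Nat.eq_zero_or_pos k with hk0 | hkpos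
        · subst hk0
          refine ⟨ξ 1, ⟨1, Or.inl ⟨1, (one_smul _ _).symm⟩⟩, ?_, ?_⟩
          · rw [hξpar, hξ0, hp0, hgroot]
          · rw [hp0, hgroot, hroot, hξlev]
        · rcases Nat.lt_or_ge 1 k with h1k | h1k
          · refine ⟨h • p (k - 1), ⟨h, Or.inr ⟨k - 1, by omega, rfl⟩⟩, ?_, ?_⟩
            · have hk' : k - 1 + 1 = k := by omega
              rw [hparent, ← hpsucc, hk']
            · rw [hlevel, hlevel, hplev (k - 1) (by omega) (by omega),
                hplev k hkpos (by omega)]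
              omega
          · have : k = 1 := by omega
            subst this
            refine ⟨(h * g⁻¹) • ξ (m + 1), ⟨h * g⁻¹, Or.inl ⟨m + 1, rfl⟩⟩, ?_, ?_⟩
            · rw [hparent, hξpar, ← hgp1, mul_smul, inv_smul_smul]
            · rw [hlevel, hlevel, hξlev, hp1lev]
    · rintro g' v ⟨h, ⟨n, rfl⟩ | ⟨k, hk, rfl⟩⟩
      · exact ⟨g' * h, Or.inl ⟨n, (mul_smul g' h _).symm⟩⟩
      · exact ⟨g' * h, Or.inr ⟨k, hk, (mul_smul g' h _).symm⟩⟩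
  have hAS : A ⊆ S := by
    rintro v ⟨h, ⟨n, rfl⟩ | ⟨k, _, rfl⟩⟩
    · exact hSinv h _ (h1 n)
    · exact hSinv h _ (hpmem S hSsub k)
  have hAS' : A ⊆ S' := by
    rintro v ⟨h, ⟨n, rfl⟩ | ⟨k, _, rfl⟩⟩
    · exact hS'inv h _ (h2 n)
    · exact hS'inv h _ (hpmem S' hS'sub k)
  rw [← hSmin A hAinv hAS, hS'min A hAinv hAS']
end

section
/- Let $a$ be the automorphism of the binary rooted tree $\{0,1\}^*$ corresponding (under the identification of $\{0,1\}^\omega$ with $(\mathbb{Z}/2\mathbb{Z})[[t]]$) to the map $f \mapsto (1+t)f + 1$. Then for every word $w \in \{0,1\}^*$ of length $|w| \geq 1$, the orbit of $w$ under the cyclic group $\langle a \rangle$ has size $2^{\lfloor \log_2 |w| \rfloor + 1}$. -/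
open Polynomial

private lemma iter_aff {R : Type*} [CommRing R] (u f : R) (N : ℕ) :
    (fun x => u * x + 1)^[N] f = u ^ N * f + ∑ i ∈ Finset.range N, u ^ i := by
  induction N with
  | zero => simp
  | succ n ih => rw [Function.iterate_succ_apply', ih, geom_sum_succ]; ring

private lemma frob2 (k : ℕ) : ((1 : (ZMod 2)[X]) + X) ^ (2 ^ k) = 1 + X ^ (2 ^ k) := by
  rw [add_pow_char_pow, one_pow]

/-- In `(ZMod 2)[X]`, `(1+X)^N - 1` has nonzero coefficient at `2^(v₂ N)`. -/
private lemma coeff_key (N : ℕ) (hN : N ≠ 0) :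
    (((1 + X : (ZMod 2)[X]) ^ N) - 1).coeff (2 ^ (N.factorization 2)) = 1 := by
  set a := N.factorization 2 with ha
  set b := N / 2 ^ a with hb
  have hNab : 2 ^ a * b = N := Nat.ordProj_mul_ordCompl_eq_self N 2
  have hbodd : ¬ (2 ∣ b) := Nat.not_dvd_ordCompl Nat.prime_two hN
  have h1 : ((1 + X : (ZMod 2)[X]) ^ N) = expand (ZMod 2) (2 ^ a) ((1 + X) ^ b) := by
    rw [map_pow, map_add, map_one, expand_X, ← hNab, pow_mul, frob2]
  have h2 : ((1 + X : (ZMod 2)[X]) ^ N).coeff (2 ^ a) = 1 := by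
    rw [h1, Polynomial.coeff_expand (Nat.two_pow_pos a)]
    rw [if_pos dvd_rfl, Nat.div_self (Nat.two_pow_pos a),
      Polynomial.coeff_one_add_X_pow, Nat.choose_one_right]
    have hb0 : (b : ZMod 2) ≠ 0 := fun h =>
      hbodd ((ZMod.natCast_eq_zero_iff b 2).mp h)
    revert hb0; generalize (b : ZMod 2) = x; revert x; decide
  have h3 : (1 : (ZMod 2)[X]).coeff (2 ^ a) = 0 := by
    rw [Polynomial.coeff_one, if_neg (Nat.two_pow_pos a).ne']
  rw [Polynomial.coeff_sub, h2, h3, sub_zero]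

/-- The generator `a` of the lamplighter automaton acts on words of length
`m ≥ 1` (identified with `(ℤ/2ℤ)[t]/(t^m)`) by `f ↦ (1+t)f + 1`; the orbit of
every word of length `m` under `⟨a⟩` has size `2^(⌊log₂ m⌋ + 1)`, i.e. the
smallest `N ≥ 1` with `a^N(w) = w` is `2^(⌊log₂ m⌋ + 1)`. -/
theorem stmt12 (m : ℕ) (hm : 1 ≤ m)
    (f : Polynomial (ZMod 2) ⧸
      Ideal.span {(Polynomial.X : Polynomial (ZMod 2)) ^ m}) :
    IsLeast {N : ℕ | 0 < N ∧
        (fun x => Ideal.Quotient.mk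
            (Ideal.span {(Polynomial.X : Polynomial (ZMod 2)) ^ m})
            (1 + Polynomial.X) * x + 1)^[N] f = f}
      (2 ^ (Nat.log 2 m + 1)) := by
  set π := Ideal.Quotient.mk (Ideal.span {(X : (ZMod 2)[X]) ^ m}) with hπ
  set u := π (1 + X) with hu
  set L := Nat.log 2 m + 1 with hL
  have hmL : m < 2 ^ L := Nat.lt_pow_succ_log_self (by norm_num) m
  have hzero : ∀ k : ℕ, m ≤ k → π (X ^ k) = 0 := fun k hk => by
    rw [hπ, Ideal.Quotient.eq_zero_iff_mem, Ideal.mem_span_singleton]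
    exact pow_dvd_pow _ hk
  have key : ∀ N : ℕ, π (∑ i ∈ Finset.range N, (1 + X) ^ i) =
      ∑ i ∈ Finset.range N, u ^ i := by
    intro N; rw [map_sum]; simp [hu]
  have geom : ∀ N : ℕ, (∑ i ∈ Finset.range N, ((1 : (ZMod 2)[X]) + X) ^ i) * X =
      (1 + X) ^ N - 1 := fun N => by
    have := geom_sum_mul ((1 : (ZMod 2)[X]) + X) N
    rwa [add_sub_cancel_left] at this
  constructor
  · -- membership
    refine ⟨Nat.two_pow_pos L, ?_⟩
    rw [iter_aff]
    have hupow : u ^ (2 ^ L) = 1 := by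
      rw [hu, ← map_pow, frob2, map_add, map_one, hzero _ hmL.le, add_zero]
    have hsum : (∑ i ∈ Finset.range (2 ^ L), u ^ i) = 0 := by
      rw [← key]
      have h1 : (∑ i ∈ Finset.range (2 ^ L), ((1 : (ZMod 2)[X]) + X) ^ i) * X =
          X ^ (2 ^ L - 1) * X := by
        rw [geom, frob2, add_sub_cancel_left, ← pow_succ,
          Nat.sub_add_cancel Nat.one_le_two_pow]
      rw [mul_right_cancel₀ Polynomial.X_ne_zero h1]
      exact hzero _ (by omega)
    rw [hupow, hsum, one_mul, add_zero]
  · -- lower bound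
    rintro N ⟨hN0, hN⟩
    rw [iter_aff] at hN
    have hX : π X = u - 1 := by rw [hu, map_add, map_one]; ring
    have hgeomR : (∑ i ∈ Finset.range N, u ^ i) * (u - 1) = u ^ N - 1 :=
      geom_sum_mul u N
    have hS : (∑ i ∈ Finset.range N, u ^ i) = (1 - u ^ N) * f := by
      linear_combination hN
    have hkey : (u ^ N - 1) * (1 + π X * f) = 0 := by
      rw [hX]
      linear_combination (u - 1) * hS - hgeomR
    have hunit : IsUnit (1 + π X * f) := by
      apply IsNilpotent.isUnit_one_add
      obtain ⟨F, rfl⟩ := Ideal.Quotient.mk_surjective f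
      refine ⟨m, ?_⟩
      rw [hπ, mul_pow, ← map_pow, ← map_pow, ← map_mul,
        Ideal.Quotient.eq_zero_iff_mem, Ideal.mem_span_singleton]
      exact Dvd.dvd.mul_right dvd_rfl _
    have huN : u ^ N - 1 = 0 := (hunit.mul_left_eq_zero).mp hkey
    have hsum0 : (∑ i ∈ Finset.range N, u ^ i) = 0 := by
      rw [hS]
      have h0 : (1 : _) - u ^ N = 0 := by linear_combination -huN
      rw [h0, zero_mul]
    have hdvd : (X : (ZMod 2)[X]) ^ m ∣ ∑ i ∈ Finset.range N, (1 + X) ^ i := by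
      rw [← Ideal.mem_span_singleton, ← Ideal.Quotient.eq_zero_iff_mem, ← hπ,
        key, hsum0]
    have hdvd2 : (X : (ZMod 2)[X]) ^ (m + 1) ∣ (1 + X) ^ N - 1 := by
      rw [← geom N, pow_succ]
      exact mul_dvd_mul hdvd dvd_rfl
    set a := N.factorization 2 with ha
    have hma : m + 1 ≤ 2 ^ a := by
      by_contra hlt
      push_neg at hlt
      have h0 := (Polynomial.X_pow_dvd_iff.mp hdvd2) _ hlt
      rw [coeff_key N hN0.ne'] at h0
      exact one_ne_zero h0
    have hLa : L ≤ a := by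
      have h1 : 2 ^ (L - 1) ≤ m := Nat.pow_log_le_self 2 (by omega)
      have h2 : 2 ^ (L - 1) < 2 ^ a := by omega
      have := (Nat.pow_lt_pow_iff_right (a := 2) (by norm_num)).mp h2
      omega
    calc 2 ^ L ≤ 2 ^ a := Nat.pow_le_pow_right (by norm_num) hLa
      _ ≤ N := Nat.le_of_dvd hN0 (Nat.ordProj_dvd N 2)
end

section
/- Let $b$ act on $(\mathbb{Z}/2\mathbb{Z})[t]/(t^{m})$ by $f \mapsto (1+t)f$. For a word of the form $0^i 1 w$ (i.e., a polynomial whose lowest-degree nonzero term is $t^i$), the orbit size under $\langle b \rangle$ equals $2^{\lfloor \log_2 |w| \rfloor + 1}$, where $|w|$ is the length of the suffix $w$; in particular the orbit size of $0^i 1 w$ equals the orbit size of $1 w$. -/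
/-! Multiplication by `1 + X` fixes `X ^ i * u` modulo `X ^ (i + n)`, for `u` with nonzero
constant term, exactly when `X ^ n ∣ (1 + X) ^ N - 1`, so the orbit size is the order of
`1 + X` modulo `X ^ n` and does not depend on `i`. In characteristic `p` that order is the least
power of `p` that is at least `n`: `(1 + X) ^ (p ^ s) = 1 + X ^ (p ^ s)` gives the upper bound,
and if `p ^ s` exactly divides `N` then the coefficient of `X ^ (p ^ s)` in `(1 + X) ^ N` is
`N / p ^ s ≠ 0`, which gives the lower bound. -/

open Polynomial

theorem Nat.clog_add_one_eq_log_add_one {b k : ℕ} (hb : 1 < b) (hk : k ≠ 0) :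
    Nat.clog b (k + 1) = Nat.log b k + 1 :=
  eq_of_forall_ge_iff fun y => by
    rw [Nat.clog_le_iff_le_pow hb, Nat.add_one_le_iff, Nat.add_one_le_iff,
      Nat.log_lt_iff_lt_pow hb hk]

section CharP

variable {R : Type*} [CommRing R] (p : ℕ) [Fact p.Prime] [CharP R p]

theorem one_add_X_pow_char_pow (s : ℕ) : (1 + X : R[X]) ^ p ^ s = 1 + X ^ p ^ s := by
  rw [add_pow_char_pow, one_pow]

theorem coeff_one_add_X_pow_ordProj_ne_zero {N : ℕ} (hN : N ≠ 0) :
    ((1 + X : R[X]) ^ N).coeff (p ^ N.factorization p) ≠ 0 := by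
  set s := N.factorization p
  have hps : 0 < p ^ s := pow_pos (Fact.out : p.Prime).pos s
  have hexpand : (1 + X : R[X]) ^ N = expand R (p ^ s) ((1 + X) ^ (N / p ^ s)) := by
    rw [map_pow, map_add, map_one, expand_X, ← one_add_X_pow_char_pow p, ← pow_mul,
      Nat.ordProj_mul_ordCompl_eq_self]
  rw [hexpand, coeff_expand hps, if_pos dvd_rfl, Nat.div_self hps, coeff_one_add_X_pow,
    Nat.choose_one_right, Ne, CharP.cast_eq_zero_iff R p]
  exact Nat.not_dvd_ordCompl Fact.out hN

theorem le_ordProj_of_X_pow_dvd_one_add_X_pow_sub_one {n N : ℕ} (hN : N ≠ 0)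
    (h : (X : R[X]) ^ n ∣ (1 + X) ^ N - 1) : n ≤ p ^ N.factorization p := by
  by_contra! hlt
  have hcoeff := X_pow_dvd_iff.mp h _ hlt
  rw [coeff_sub, coeff_one, if_neg (pow_pos (Fact.out : p.Prime).pos _).ne', sub_zero] at hcoeff
  exact coeff_one_add_X_pow_ordProj_ne_zero p hN hcoeff

theorem isLeast_X_pow_dvd_one_add_X_pow_sub_one (n : ℕ) :
    IsLeast {N : ℕ | 0 < N ∧ (X : R[X]) ^ n ∣ (1 + X) ^ N - 1} (p ^ Nat.clog p n) := by
  have hp : 1 < p := (Fact.out : p.Prime).one_lt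
  refine ⟨⟨pow_pos (by omega) _, ?_⟩, ?_⟩
  · rw [one_add_X_pow_char_pow, add_sub_cancel_left]
    exact pow_dvd_pow _ (Nat.le_pow_clog hp n)
  · rintro N ⟨hN, hdvd⟩
    calc p ^ Nat.clog p n ≤ p ^ N.factorization p :=
          Nat.pow_le_pow_right (by omega) <| Nat.clog_le_of_le_pow <|
            le_ordProj_of_X_pow_dvd_one_add_X_pow_sub_one p hN.ne' hdvd
      _ ≤ N := Nat.le_of_dvd hN (Nat.ordProj_dvd N p)

end CharP

theorem mk_mul_X_pow_mul_eq_self_iff {R : Type*} [CommRing R] [IsDomain R] {u : R[X]}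
    (hu : ¬ X ∣ u) (i n : ℕ) (c : R[X]) :
    Ideal.Quotient.mk (Ideal.span {X ^ (i + n)}) c * Ideal.Quotient.mk _ (X ^ i * u) =
        Ideal.Quotient.mk _ (X ^ i * u) ↔ X ^ n ∣ c - 1 := by
  rw [← map_mul, Ideal.Quotient.eq, Ideal.mem_span_singleton,
    show c * (X ^ i * u) - X ^ i * u = X ^ i * ((c - 1) * u) by ring, pow_add,
    mul_dvd_mul_iff_left (pow_ne_zero i X_ne_zero)]
  exact ⟨prime_X.pow_dvd_of_dvd_mul_right _ hu, (Dvd.dvd.mul_right · _)⟩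

theorem isLeast_orbit_X_pow_mul {R : Type*} [CommRing R] [IsDomain R] (p : ℕ) [Fact p.Prime]
    [CharP R p] {u : R[X]} (hu : ¬ X ∣ u) (i n : ℕ) :
    IsLeast {N : ℕ | 0 < N ∧
        Ideal.Quotient.mk (Ideal.span {X ^ (i + n)}) (1 + X) ^ N *
          Ideal.Quotient.mk _ (X ^ i * u) = Ideal.Quotient.mk _ (X ^ i * u)}
      (p ^ Nat.clog p n) := by
  simp_rw [← map_pow, mk_mul_X_pow_mul_eq_self_iff hu]
  exact isLeast_X_pow_dvd_one_add_X_pow_sub_one p n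

/-- Let `b` act by `f ↦ (1+t)f`. A word `0^i 1 w` of length `m = i + 1 + k`
(where `k = |w| ≥ 1`) corresponds to `t^i (1 + t g(t))` in
`(ℤ/2ℤ)[t]/(t^m)`. Its orbit size under `⟨b⟩` (the least period) equals
`2^(⌊log₂ k⌋ + 1)`; in particular it equals the orbit size of the word `1 w`,
which corresponds to `1 + t g(t)` in `(ℤ/2ℤ)[t]/(t^(1+k))`. -/
theorem stmt13 (i k : ℕ) (hk : 1 ≤ k) (g : Polynomial (ZMod 2)) :
    IsLeast {N : ℕ | 0 < N ∧
        (Ideal.Quotient.mk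
            (Ideal.span {(Polynomial.X : Polynomial (ZMod 2)) ^ (i + 1 + k)})
            (1 + Polynomial.X)) ^ N *
          Ideal.Quotient.mk
            (Ideal.span {(Polynomial.X : Polynomial (ZMod 2)) ^ (i + 1 + k)})
            (Polynomial.X ^ i * (1 + Polynomial.X * g)) =
        Ideal.Quotient.mk
            (Ideal.span {(Polynomial.X : Polynomial (ZMod 2)) ^ (i + 1 + k)})
            (Polynomial.X ^ i * (1 + Polynomial.X * g))}
      (2 ^ (Nat.log 2 k + 1)) ∧
    IsLeast {N : ℕ | 0 < N ∧
        (Ideal.Quotient.mk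
            (Ideal.span {(Polynomial.X : Polynomial (ZMod 2)) ^ (1 + k)})
            (1 + Polynomial.X)) ^ N *
          Ideal.Quotient.mk
            (Ideal.span {(Polynomial.X : Polynomial (ZMod 2)) ^ (1 + k)})
            (1 + Polynomial.X * g) =
        Ideal.Quotient.mk
            (Ideal.span {(Polynomial.X : Polynomial (ZMod 2)) ^ (1 + k)})
            (1 + Polynomial.X * g)}
      (2 ^ (Nat.log 2 k + 1)) := by
  have hu : ¬ X ∣ 1 + X * g := by simp [X_dvd_iff]
  have hclog : Nat.clog 2 (1 + k) = Nat.log 2 k + 1 := by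
    rw [add_comm]
    exact Nat.clog_add_one_eq_log_add_one one_lt_two (by omega)
  have horbit (j : ℕ) := hclog ▸ isLeast_orbit_X_pow_mul 2 hu j (1 + k)
  have horbit_zero := horbit 0
  rw [Nat.zero_add, pow_zero, one_mul] at horbit_zero
  rw [Nat.add_assoc]
  exact ⟨horbit i, horbit_zero⟩
end

section
/- Let $a$ be the automorphism of the binary rooted tree given in self-similar form by $a = (b, a)\sigma$, $b = (b, a)$, where $\sigma$ swaps the two subtrees. Then for every infinite binary sequence $\xi = a_0 a_1 a_2 \ldots$, identifying $\xi$ with the power series $f(t) = \sum a_i t^i \in (\mathbb{Z}/2\mathbb{Z})[[t]]$, one has $a(\xi)$ corresponds to $(1+t)f(t) + 1$ and $b(\xi)$ corresponds to $(1+t)f(t)$. -/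
/-- Prepending a letter to an infinite binary sequence. -/
def consSeq (x : ZMod 2) (w : ℕ → ZMod 2) : ℕ → ZMod 2 :=
  fun n => match n with
  | 0 => x
  | n + 1 => w n

/-- If `a, b` are the automorphisms of the binary rooted tree given by the
wreath recursion `a = (b, a)σ`, `b = (b, a)` (i.e. `a(0w) = 1·b(w)`,
`a(1w) = 0·a(w)`, `b(0w) = 0·b(w)`, `b(1w) = 1·a(w)`), then, identifying a
binary sequence `(a_i)` with the power series `∑ a_i t^i ∈ (ℤ/2ℤ)[[t]]`, the
action of `a` is `f ↦ (1+t)f + 1` and the action of `b` is `f ↦ (1+t)f`. -/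
theorem stmt18 (a b : (ℕ → ZMod 2) → (ℕ → ZMod 2))
    (ha0 : ∀ w, a (consSeq 0 w) = consSeq 1 (b w))
    (ha1 : ∀ w, a (consSeq 1 w) = consSeq 0 (a w))
    (hb0 : ∀ w, b (consSeq 0 w) = consSeq 0 (b w))
    (hb1 : ∀ w, b (consSeq 1 w) = consSeq 1 (a w)) :
    ∀ ξ : ℕ → ZMod 2,
      PowerSeries.mk (a ξ) =
          (1 + PowerSeries.X) * PowerSeries.mk ξ + 1 ∧
        PowerSeries.mk (b ξ) = (1 + PowerSeries.X) * PowerSeries.mk ξ := by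
  have hcons : ∀ ξ : ℕ → ZMod 2, ξ = consSeq (ξ 0) (fun k => ξ (k + 1)) := by
    intro ξ; funext n; cases n <;> rfl
  have hx2 : ∀ x : ZMod 2, x = 0 ∨ x = 1 := by decide
  have key : ∀ n (ξ : ℕ → ZMod 2),
      a ξ n = ξ n + (if n = 0 then 1 else ξ (n - 1)) ∧
      b ξ n = ξ n + (if n = 0 then 0 else ξ (n - 1)) := by
    intro n
    induction n with
    | zero =>
      intro ξ
      set w : ℕ → ZMod 2 := fun k => ξ (k + 1) with hw
      have h0 : ξ = consSeq (ξ 0) w := hcons ξ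
      rcases hx2 (ξ 0) with h | h <;> rw [h] at h0 <;> rw [h0] <;>
        simp [ha0, ha1, hb0, hb1, consSeq] <;> decide
    | succ n ih =>
      intro ξ
      set w : ℕ → ZMod 2 := fun k => ξ (k + 1) with hw
      have h0 : ξ = consSeq (ξ 0) w := hcons ξ
      rcases hx2 (ξ 0) with h | h <;> rw [h] at h0 <;> rw [h0] <;>
        rcases n with _ | m <;>
        simp [ha0, ha1, hb0, hb1, consSeq, (ih w).1, (ih w).2]
  intro ξ
  constructor <;> [skip; skip] <;>
  · ext n
    rcases n with _ | m <;>
      simp [add_mul, one_mul, PowerSeries.coeff_mk, PowerSeries.coeff_one,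
        PowerSeries.coeff_succ_X_mul, (key _ ξ).1, (key _ ξ).2, add_comm,
        add_assoc, add_left_comm]
end
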